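/- Estimate on the inverse diffeomorphism: if v ∈ 𝒜(𝕋ⁿ_{s+2σ}, ℂⁿ) with |v|_{s+2σ} < σ, and ψ : 𝕋ⁿ_s → 𝕋ⁿ_{s+σ} is the (unique) right inverse of the induced map φ = id + v, then |ψ − id|_s ≤ |v|_{s+σ}, and if moreover 2σ^{−1}|v|_{s+2σ} ≤ 1 then |ψ' − id|_s ≤ 2σ^{−1}|v|_{s+2σ}. -/

import Mathlib

/-!
Since `ψ y - y = -v (ψ y)` and `ψ y` lies in the strip of width `s + σ`, the first bound is
immediate. Differentiating `ψ + v ∘ ψ = id` gives `ψ' + v'(ψ y) ψ' = 1`. The sup-norm ball of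
radius `σ` around `ψ y` lies in the strip of width `s + 2σ`, so Cauchy's estimate gives
`‖v'(ψ y)‖ ≤ M₂ / σ ≤ 1/2`, and the Neumann-series bound turns this into
`‖ψ' - 1‖ ≤ 2 ‖v'(ψ y)‖` for the operator norm of the sup norm, which dominates every
matrix entry.
-/

/-- The closed strip of width `r` in `ℂⁿ` (lift of `𝕋ⁿ_r`). -/
def strip (n : ℕ) (r : ℝ) : Set (Fin n → ℂ) := {z | ∀ j, |(z j).im| ≤ r}

/-- The open strip of width `r` (interior of `strip n r`). -/
def ostrip (n : ℕ) (r : ℝ) : Set (Fin n → ℂ) := {z | ∀ j, |(z j).im| < r}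

open Metric Set Filter Topology

section CauchyEstimate

variable {E F : Type*} [NormedAddCommGroup E] [NormedSpace ℂ E]
  [NormedAddCommGroup F] [NormedSpace ℂ F]

theorem Complex.norm_deriv_le_of_forall_mem_ball_norm_le {f : ℂ → F} {c : ℂ} {R M : ℝ}
    (hR : 0 < R) (hd : DifferentiableOn ℂ f (ball c R)) (hM : ∀ z ∈ ball c R, ‖f z‖ ≤ M) :
    ‖deriv f c‖ ≤ M / R := by
  have hr : ∀ r ∈ Ioo 0 R, ‖deriv f c‖ ≤ M / r := fun r hr =>
    norm_deriv_le_of_forall_mem_sphere_norm_le hr.1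
      (hd.diffContOnCl_ball (closedBall_subset_ball hr.2))
      fun z hz => hM z (closedBall_subset_ball hr.2 (sphere_subset_closedBall hz))
  refine ge_of_tendsto (x := 𝓝[<] R) ((tendsto_const_nhds.div tendsto_id hR.ne').mono_left
    nhdsWithin_le_nhds) ?_
  filter_upwards [Ioo_mem_nhdsLT hR] using hr

theorem norm_fderiv_le_of_forall_mem_ball_norm_le {f : E → F} {c : E} {R M : ℝ}
    (hR : 0 < R) (hd : DifferentiableOn ℂ f (ball c R)) (hM : ∀ z ∈ ball c R, ‖f z‖ ≤ M) :
    ‖fderiv ℂ f c‖ ≤ M / R := by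
  have hM0 : 0 ≤ M := (norm_nonneg _).trans (hM c (mem_ball_self hR))
  refine ContinuousLinearMap.opNorm_le_bound _ (by positivity) fun u => ?_
  rcases eq_or_ne u 0 with rfl | hu
  · simp
  have hu : 0 < ‖u‖ := norm_pos_iff.2 hu
  have hline : HasDerivAt (fun t : ℂ => c + t • u) u 0 := by
    simpa using ((hasDerivAt_id (0 : ℂ)).smul_const u).const_add c
  have hmaps : MapsTo (fun t : ℂ => c + t • u) (ball 0 (R / ‖u‖)) (ball c R) := by
    intro t ht
    simpa [norm_smul, lt_div_iff₀ hu] using ht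
  have hderiv : deriv (fun t : ℂ => f (c + t • u)) 0 = fderiv ℂ f c u := by
    have hf : HasFDerivAt f (fderiv ℂ f c) (c + (0 : ℂ) • u) := by
      simpa using (hd.differentiableAt (ball_mem_nhds c hR)).hasFDerivAt
    exact (hf.comp_hasDerivAt 0 hline).deriv
  have hdiff : DifferentiableOn ℂ (fun t : ℂ => c + t • u) (ball 0 (R / ‖u‖)) := by
    fun_prop
  calc ‖fderiv ℂ f c u‖ ≤ M / (R / ‖u‖) := hderiv ▸
        Complex.norm_deriv_le_of_forall_mem_ball_norm_le (div_pos hR hu)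
          (hd.comp hdiff hmaps) fun t ht => hM _ (hmaps ht)
    _ = M / R * ‖u‖ := by field_simp

end CauchyEstimate

section RightInverse

variable {𝕜 E : Type*} [NontriviallyNormedField 𝕜] [NormedAddCommGroup E] [NormedSpace 𝕜 E]

theorem fderiv_add_fderiv_mul_eq_one_of_add_eq_id {ψ v : E → E} {y : E}
    (hψ : DifferentiableAt 𝕜 ψ y) (hv : DifferentiableAt 𝕜 v (ψ y))
    (hinv : ∀ᶠ x in 𝓝 y, ψ x + v (ψ x) = x) :
    fderiv 𝕜 ψ y + fderiv 𝕜 v (ψ y) * fderiv 𝕜 ψ y = 1 :=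
  (hψ.hasFDerivAt.add (hv.hasFDerivAt.comp y hψ.hasFDerivAt)).unique
    ((hasFDerivAt_id y).congr_of_eventuallyEq hinv)

theorem norm_sub_one_le_two_mul_of_add_mul_eq_one {A B : E →L[𝕜] E} (h : A + B * A = 1)
    (hB : ‖B‖ ≤ 2⁻¹) : ‖A - 1‖ ≤ 2 * ‖B‖ := by
  have hA : A - 1 = -(B + B * (A - 1)) := by
    nth_rw 1 [← h]; noncomm_ring
  have : ‖A - 1‖ ≤ ‖B‖ + ‖B‖ * ‖A - 1‖ := by
    calc ‖A - 1‖ = ‖B + B * (A - 1)‖ := (congrArg norm hA).trans (norm_neg _)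
      _ ≤ ‖B‖ + ‖B * (A - 1)‖ := norm_add_le _ _
      _ ≤ ‖B‖ + ‖B‖ * ‖A - 1‖ := by gcongr; exact norm_mul_le _ _
  nlinarith [mul_le_mul_of_nonneg_right hB (norm_nonneg (A - 1))]

theorem norm_apply_single_sub_ite_le {ι : Type*} [Fintype ι] [DecidableEq ι]
    (L : (ι → 𝕜) →L[𝕜] (ι → 𝕜)) (i j : ι) :
    ‖L (Pi.single j 1) i - (if i = j then (1 : 𝕜) else 0)‖ ≤ ‖L - 1‖ := by
  have hL : L (Pi.single j 1) i - (if i = j then 1 else 0) = (L - 1) (Pi.single j 1) i := by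
    simp [Pi.single_apply]
  rw [hL]
  exact (norm_le_pi_norm _ i).trans
    ((ContinuousLinearMap.le_opNorm_of_le _ (by simp [Pi.norm_single])).trans_eq (mul_one _))

end RightInverse

theorem isOpen_ostrip (n : ℕ) (r : ℝ) : IsOpen (ostrip n r) := by
  simp only [ostrip, ofPred_forall]
  exact isOpen_iInter_of_finite fun j => isOpen_lt (by fun_prop) continuous_const

theorem ostrip_subset_strip {n : ℕ} {r : ℝ} : ostrip n r ⊆ strip n r :=
  fun _ hz j => (hz j).le

theorem ball_subset_ostrip {n : ℕ} {r δ : ℝ} {z : Fin n → ℂ} (hz : z ∈ strip n r) :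
    ball z δ ⊆ ostrip n (r + δ) := by
  intro w hw j
  have hwz : ‖(w - z) j‖ < δ := (norm_le_pi_norm _ j).trans_lt (by rwa [← dist_eq_norm])
  calc |(w j).im| = |(z j).im + ((w - z) j).im| := by simp
    _ ≤ |(z j).im| + ‖(w - z) j‖ :=
        (abs_add_le _ _).trans (add_le_add_right (Complex.abs_im_le_norm _) _)
    _ < r + δ := add_lt_add_of_le_of_lt (hz j) hwz

theorem stmt_11_general (n : ℕ) (s σ : ℝ) (hσ : 0 < σ)
    (v : (Fin n → ℂ) → (Fin n → ℂ))
    (hv₂ : DifferentiableOn ℂ v (ostrip n (s + 2 * σ)))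
    (M₁ M₂ : ℝ)
    (hM₁ : ∀ z ∈ strip n (s + σ), ∀ j, ‖v z j‖ ≤ M₁)
    (hM₂ : ∀ z ∈ strip n (s + 2 * σ), ∀ j, ‖v z j‖ ≤ M₂)
    (ψ : (Fin n → ℂ) → (Fin n → ℂ))
    (hψmap : ∀ y ∈ strip n s, ψ y ∈ strip n (s + σ))
    (hψinv : ∀ y ∈ strip n s, ψ y + v (ψ y) = y)
    (hψdiff : ∀ y ∈ ostrip n s, DifferentiableAt ℂ ψ y) :
    (∀ y ∈ strip n s, ∀ j, ‖ψ y j - y j‖ ≤ M₁) ∧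
    (2 * σ⁻¹ * M₂ ≤ 1 →
      ∀ y ∈ ostrip n s, ∀ i j : Fin n,
        ‖fderiv ℂ ψ y (Pi.single j 1) i - (if i = j then (1 : ℂ) else 0)‖
          ≤ 2 * σ⁻¹ * M₂) := by
  refine ⟨fun y hy j => ?_, fun hsmall y hy i j => ?_⟩
  · have h : ψ y j - y j = -v (ψ y) j := by
      rw [← congrFun (hψinv y hy) j, Pi.add_apply]; ring
    simpa [h] using hM₁ _ (hψmap y hy) j
  have hball : ball (ψ y) σ ⊆ ostrip n (s + 2 * σ) := by
    simpa [add_assoc, two_mul] using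
      ball_subset_ostrip (δ := σ) (hψmap y (ostrip_subset_strip hy))
  have hM₂0 : 0 ≤ M₂ :=
    (norm_nonneg _).trans (hM₂ _ (ostrip_subset_strip (hball (mem_ball_self hσ))) i)
  have hB : ‖fderiv ℂ v (ψ y)‖ ≤ M₂ / σ :=
    norm_fderiv_le_of_forall_mem_ball_norm_le hσ (hv₂.mono hball) fun w hw =>
      (pi_norm_le_iff_of_nonneg hM₂0).2 (hM₂ w (ostrip_subset_strip (hball hw)))
  have hid := fderiv_add_fderiv_mul_eq_one_of_add_eq_id (hψdiff y hy)
    (hv₂.differentiableAt ((isOpen_ostrip n _).mem_nhds (hball (mem_ball_self hσ))))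
    (eventually_of_mem ((isOpen_ostrip n s).mem_nhds hy)
      fun x hx => hψinv x (ostrip_subset_strip hx))
  have hβ : M₂ / σ ≤ 2⁻¹ := by
    rw [div_le_iff₀ hσ]; field_simp at hsmall; linarith
  calc ‖fderiv ℂ ψ y (Pi.single j 1) i - (if i = j then (1 : ℂ) else 0)‖
      ≤ ‖fderiv ℂ ψ y - 1‖ := norm_apply_single_sub_ite_le _ i j
    _ ≤ 2 * (M₂ / σ) :=
        (norm_sub_one_le_two_mul_of_add_mul_eq_one hid (hB.trans hβ)).trans (by gcongr)
    _ = 2 * σ⁻¹ * M₂ := by ring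

/-- Estimate on the inverse: if `v ∈ 𝒜(𝕋ⁿ_{s+2σ}, ℂⁿ)` with `|v|_{s+2σ} < σ` and `ψ`
is the right inverse of `φ = id + v`, mapping `𝕋ⁿ_s` into `𝕋ⁿ_{s+σ}`, then
`|ψ - id|_s ≤ |v|_{s+σ}`, and if moreover `2σ⁻¹|v|_{s+2σ} ≤ 1`, the Jacobian satisfies
`|ψ' - id|_s ≤ 2σ⁻¹|v|_{s+2σ}` (entrywise, i.e. in the max norm on matrices). -/
theorem stmt_11 (n : ℕ) (s σ : ℝ) (hs : 0 ≤ s) (hσ : 0 < σ)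
    (v : (Fin n → ℂ) → (Fin n → ℂ))
    (hv₁ : ContinuousOn v (strip n (s + 2 * σ)))
    (hv₂ : DifferentiableOn ℂ v (ostrip n (s + 2 * σ)))
    (hper : ∀ (z : Fin n → ℂ) (j : Fin n),
      v (Function.update z j (z j + 2 * Real.pi)) = v z)
    (M₁ M₂ : ℝ) (hM₂σ : M₂ < σ)
    (hM₁ : ∀ z ∈ strip n (s + σ), ∀ j, ‖v z j‖ ≤ M₁)
    (hM₂ : ∀ z ∈ strip n (s + 2 * σ), ∀ j, ‖v z j‖ ≤ M₂)
    (ψ : (Fin n → ℂ) → (Fin n → ℂ))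
    (hψmap : ∀ y ∈ strip n s, ψ y ∈ strip n (s + σ))
    (hψinv : ∀ y ∈ strip n s, ψ y + v (ψ y) = y)
    (hψdiff : ∀ y ∈ ostrip n s, DifferentiableAt ℂ ψ y) :
    (∀ y ∈ strip n s, ∀ j, ‖ψ y j - y j‖ ≤ M₁) ∧
    (2 * σ⁻¹ * M₂ ≤ 1 →
      ∀ y ∈ ostrip n s, ∀ i j : Fin n,
        ‖fderiv ℂ ψ y (Pi.single j 1) i - (if i = j then (1 : ℂ) else 0)‖
          ≤ 2 * σ⁻¹ * M₂) :=
  stmt_11_general n s σ hσ v hv₂ M₁ M₂ hM₁ hM₂ ψ hψmap hψinv hψdiff
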